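/- arXiv:math/9801128 — 3 statements merged into one kernel-verified Lean document; each statement's English description precedes it below -/
import Mathlib

section
/- Let p < q be primes and suppose natural numbers a ≥ 1, b with 1 ≤ b < q satisfy pq = 1 + a·p + b·q and pq ≥ p²·(a + b + 1 - p) + p. Then b = p - 1 and a = (q - 1)/p (in particular p divides q - 1). -/
theorem stmt_4 (p q : ℕ) (hp : p.Prime) (hq : q.Prime) (hpq : p < q)
    (a b : ℕ) (ha : 1 ≤ a) (hb1 : 1 ≤ b) (hbq : b < q)
    (hclass : p * q = 1 + a * p + b * q)
    (hineq : (p * q : ℤ) ≥ (p : ℤ) ^ 2 * ((a : ℤ) + b + 1 - p) + p) :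
    b = p - 1 ∧ p ∣ q - 1 ∧ a = (q - 1) / p := by
  have hp2 : (2:ℤ) ≤ p := by exact_mod_cast hp.two_le
  have hpqz : (p:ℤ) < q := by exact_mod_cast hpq
  have haz : (1:ℤ) ≤ a := by exact_mod_cast ha
  have hc : (p:ℤ) * q = 1 + a * p + b * q := by exact_mod_cast hclass
  have hble : (b:ℤ) ≤ p - 1 := by nlinarith [hc, haz, hpqz, hp2, mul_pos (show (0:ℤ) < q by linarith) (show (0:ℤ) < q by linarith), (show (0:ℤ) < (q:ℤ) by linarith)]
  have h1 : (a:ℤ) * p = p * q - 1 - b * q := by linarith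
  have h2 : (a:ℤ) * p * p = (p * q - 1 - b * q) * p := by rw [h1]
  have h3 : (0:ℤ) ≥ (p:ℤ)*(((p:ℤ)-1-b)*((q:ℤ)-p)) := by nlinarith [hineq, h2]
  have hbge : (p:ℤ) - 1 ≤ b := by
    by_contra h
    push_neg at h
    have h4 : (0:ℤ) < (p:ℤ)*(((p:ℤ)-1-b)*((q:ℤ)-p)) :=
      mul_pos (by linarith) (mul_pos (by linarith) (by linarith))
    linarith
  have hbz : (b:ℤ) + 1 = p := by linarith
  have hb : b + 1 = p := by exact_mod_cast hbz
  have hapz : (a:ℤ) * p = q - 1 := by nlinarith [hc, hbz]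
  have hap : a * p + 1 = q := by
    have : (a:ℤ) * p + 1 = q := by linarith
    exact_mod_cast this
  refine ⟨by omega, ⟨a, show q - 1 = p * a by rw [mul_comm]; omega⟩, ?_⟩
  have : q - 1 = a * p := by omega
  rw [this, Nat.mul_div_cancel a hp.pos]
end

section
/- Let p be a prime with p ≡ 2 or 4 (mod 5). Then there do not exist natural numbers a ≥ 1 and b with 1 ≤ b ≤ 4 and natural number n ≥ a + b such that 5p = 1 + 5a + b·p and 5p ≥ 9(n - 1) + 17. -/
theorem stmt_5 (p : ℕ) (hp : p.Prime) (hmod : p % 5 = 2 ∨ p % 5 = 4) :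
    ¬ ∃ a b n : ℕ, 1 ≤ a ∧ 1 ≤ b ∧ b ≤ 4 ∧ a + b ≤ n ∧
      5 * p = 1 + 5 * a + b * p ∧ 5 * p ≥ 9 * (n - 1) + 17 := by
  rintro ⟨a, b, n, ha, hb1, hb4, habn, heq, hge⟩
  interval_cases b <;> omega
end

section
/- Let p be a prime with p ≡ 6 (mod 7) or p ∈ {17, 31}. Then there do not exist natural numbers a ≥ 1, b with 1 ≤ b ≤ 6, and n ≥ a + b such that 7p = 1 + 7a + b·p and 7p ≥ 9(n - 1) + 17. -/
theorem stmt_7 (p : ℕ) (hp : p.Prime) (hmod : p % 7 = 6 ∨ p = 17 ∨ p = 31) :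
    ¬ ∃ a b n : ℕ, 1 ≤ a ∧ 1 ≤ b ∧ b ≤ 6 ∧ a + b ≤ n ∧
      7 * p = 1 + 7 * a + b * p ∧ 7 * p ≥ 9 * (n - 1) + 17 := by
  rintro ⟨a, b, n, ha, hb, hb6, hn, heq, hineq⟩
  rcases hmod with h | h | h <;> interval_cases b <;> omega
end
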